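/- Let X ∈ ℝ^{n×n} be a rank-r matrix that is {μ₁,μ₂}-incoherent. Suppose I is a multiset of |I| ≥ 10 μ₁ r log(n) row indices and J is a multiset of |J| ≥ 10 μ₂ r log(n) column indices, each drawn i.i.d. uniformly from {1,…,n} (sampling with replacement). Then with probability at least 1 − 4r/n², X = [X]_{:,J} ([X]_{I,J})† [X]_{I,:}, i.e., X is exactly reconstructed by the CUR decomposition formed from its sampled columns and rows. -/

import Mathlib

open Matrix
open scoped Classical

/-- `B` is the Moore–Penrose pseudoinverse of `A`, characterized by the four
Penrose conditions (over `ℝ`, where conjugate transpose is transpose). -/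
def IsMPInv {m n : Type*} [Fintype m] [Fintype n] (A : Matrix m n ℝ)
    (B : Matrix n m ℝ) : Prop :=
  A * B * A = A ∧ B * A * B = B ∧ (A * B)ᵀ = A * B ∧ (B * A)ᵀ = B * A

/-- Probability of the event `P` under the uniform distribution on the finite
type `α` (counting measure normalized). -/
noncomputable def unifProb {α : Type*} [Fintype α] (P : α → Prop) : ℝ :=
  ((Finset.univ.filter P).card : ℝ) / (Fintype.card α : ℝ)

/-!
Since `Wᵀ W = 1`, the rows `w₁, …, wₙ ∈ ℝʳ` of `W` form a Parseval frame, and incoherence says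
`‖wₓ‖² ≤ μ r / n`. If a subspace `U` has codimension `d`, expanding an orthonormal basis of `Uᗮ` in
the frame shows that at least `n d / (μ r)` rows lie outside `U`. Hence one more uniformly sampled
row lowers the expected codimension of the span of the sampled rows by the factor `1 - 1/(μ r)`,
and after `t ≥ 10 μ r log n` samples the expected codimension is at most
`r e^{-t/(μ r)} ≤ r / n¹⁰`. By Markov's inequality, `W[I,:]` has rank `r` except with probability
`r / n¹⁰`, and likewise `V[J,:]`. When both have full column rank they have left inverses, which
cancel the outer factors of `X[I,J] U X[I,J] = X[I,J]` and give `X = X[:,J] U X[I,:]`.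
-/

open Module Submodule
open scoped RealInnerProductSpace

section UniformProbability

variable {α β : Type*} [Fintype α] [Fintype β]

theorem unifProb_le_one (P : α → Prop) : unifProb P ≤ 1 :=
  div_le_one_of_le₀ (Nat.cast_le.mpr (Finset.card_le_univ _)) (Nat.cast_nonneg _)

theorem unifProb_mono {P Q : α → Prop} (h : ∀ a, P a → Q a) : unifProb P ≤ unifProb Q :=
  div_le_div_of_nonneg_right
    (Nat.cast_le.mpr (Finset.card_le_card (Finset.monotone_filter_right _ fun a _ => h a)))
    (Nat.cast_nonneg _)

theorem unifProb_not [Nonempty α] (P : α → Prop) :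
    unifProb (fun a => ¬P a) = 1 - unifProb P := by
  have hcard : (0 : ℝ) < Fintype.card α := Nat.cast_pos.mpr Fintype.card_pos
  have hsplit := Finset.card_filter_add_card_filter_not (s := Finset.univ) P
  rw [Finset.card_univ, add_comm] at hsplit
  rw [unifProb, unifProb, eq_sub_iff_add_eq, ← add_div, div_eq_one_iff_eq hcard.ne',
    ← Nat.cast_add, Nat.cast_inj]
  convert hsplit

theorem unifProb_prod_and (P : α → Prop) (Q : β → Prop) :
    unifProb (fun p : α × β => P p.1 ∧ Q p.2) = unifProb P * unifProb Q := by
  have hfilter : Finset.univ.filter (fun p : α × β => P p.1 ∧ Q p.2) =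
      Finset.univ.filter P ×ˢ Finset.univ.filter Q := by
    ext; simp
  rw [unifProb, unifProb, unifProb, div_mul_div_comm, Fintype.card_prod, ← Nat.cast_mul,
    ← Nat.cast_mul, ← Finset.card_product, ← hfilter]
  congr

theorem one_sub_add_le_unifProb_and {P : α → Prop} {Q : β → Prop} {a b : ℝ}
    (hP : 1 - a ≤ unifProb P) (hQ : 1 - b ≤ unifProb Q) :
    1 - (a + b) ≤ unifProb fun p : α × β => P p.1 ∧ Q p.2 := by
  rw [unifProb_prod_and]
  nlinarith [unifProb_le_one P, unifProb_le_one Q]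

end UniformProbability

theorem span_range_comp_cons {R M ι : Type*} [Semiring R] [AddCommMonoid M] [Module R M]
    {t : ℕ} (v : ι → M) (x : ι) (f : Fin t → ι) :
    span R (Set.range (v ∘ Fin.cons x f)) = span R (Set.range (v ∘ f)) ⊔ R ∙ v x := by
  rw [Fin.comp_cons, Fin.range_cons, span_insert, sup_comm]

theorem finrank_orthogonal_sup_span_singleton_add {E : Type*} [NormedAddCommGroup E]
    [InnerProductSpace ℝ E] [FiniteDimensional ℝ E] (U : Submodule ℝ E) (y : E) :
    finrank ℝ (U ⊔ ℝ ∙ y)ᗮ + (if y ∈ U then 0 else 1) = finrank ℝ Uᗮ := by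
  by_cases hy : y ∈ U
  · rw [if_pos hy, add_zero, sup_eq_left.mpr ((span_singleton_le_iff_mem _ _).mpr hy)]
  · have h₁ := finrank_add_finrank_orthogonal U
    have h₂ := finrank_add_finrank_orthogonal (U ⊔ ℝ ∙ y)
    rw [finrank_sup_span_singleton hy] at h₂
    rw [if_neg hy]
    omega

theorem one_sub_inv_pow_le_inv_pow {γ : ℝ} (hγ : 1 ≤ γ) {n s t : ℕ} (hn : 0 < n)
    (ht : s * γ * Real.log n ≤ t) : (1 - γ⁻¹) ^ t ≤ ((n : ℝ) ^ s)⁻¹ := by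
  calc (1 - γ⁻¹) ^ t ≤ Real.exp (-γ⁻¹) ^ t :=
        pow_le_pow_left₀ (sub_nonneg.mpr (inv_le_one_of_one_le₀ hγ)) (Real.one_sub_le_exp_neg _) t
    _ = Real.exp (-(t / γ)) := by rw [← Real.exp_nat_mul]; ring_nf
    _ ≤ Real.exp (-Real.log ((n : ℝ) ^ s)) := by
        rw [Real.exp_le_exp, neg_le_neg_iff, Real.log_pow, le_div_iff₀ (zero_lt_one.trans_le hγ)]
        linarith
    _ = ((n : ℝ) ^ s)⁻¹ := by rw [Real.exp_neg, Real.exp_log (by positivity)]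

def IsParsevalFrame {ι E : Type*} [Fintype ι] [NormedAddCommGroup E] [InnerProductSpace ℝ E]
    (v : ι → E) : Prop :=
  ∀ u, ∑ x, ⟪v x, u⟫ ^ 2 = ‖u‖ ^ 2

namespace IsParsevalFrame

variable {ι E : Type*} [Fintype ι] [NormedAddCommGroup E] [InnerProductSpace ℝ E]
  [FiniteDimensional ℝ E] {v : ι → E}

theorem sum_norm_sq (hv : IsParsevalFrame v) : ∑ x, ‖v x‖ ^ 2 = finrank ℝ E := by
  let b := stdOrthonormalBasis ℝ E
  calc ∑ x, ‖v x‖ ^ 2 = ∑ j, ∑ x, ⟪v x, b j⟫ ^ 2 := by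
        rw [Finset.sum_comm]; simp_rw [b.sum_sq_inner_left]
    _ = finrank ℝ E := by simp [hv _, b.orthonormal.1]

theorem finrank_orthogonal_le_card_notMem_mul (hv : IsParsevalFrame v) {β : ℝ}
    (hβ : ∀ x, ‖v x‖ ^ 2 ≤ β) (U : Submodule ℝ E) :
    (finrank ℝ Uᗮ : ℝ) ≤ (Finset.univ.filter fun x => v x ∉ U).card * β := by
  let b := stdOrthonormalBasis ℝ Uᗮ
  have hb : Orthonormal ℝ fun j => (b j : E) :=
    Uᗮ.subtypeₗᵢ.orthonormal_comp_iff.mpr b.orthonormal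
  have bessel (x : ι) : ∑ j, ⟪v x, b j⟫ ^ 2 ≤ ‖v x‖ ^ 2 := by
    simpa [real_inner_comm, sq_abs] using hb.sum_inner_products_le (v x) (s := Finset.univ)
  calc (finrank ℝ Uᗮ : ℝ) = ∑ x, ∑ j, ⟪v x, b j⟫ ^ 2 := by
        rw [Finset.sum_comm]; simp [hv _, hb.1]
    _ = ∑ x ∈ Finset.univ.filter fun x => v x ∉ U, ∑ j, ⟪v x, b j⟫ ^ 2 := by
        refine (Finset.sum_filter_of_ne (p := fun x => v x ∉ U) fun x _ hx hxU => hx ?_).symm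
        exact Finset.sum_eq_zero fun j _ => by rw [(b j).2 _ hxU]; ring
    _ ≤ ∑ x ∈ Finset.univ.filter fun x => v x ∉ U, β :=
        Finset.sum_le_sum fun x _ => (bessel x).trans (hβ x)
    _ = _ := by rw [Finset.sum_const, nsmul_eq_mul]

variable [Nonempty ι] {γ : ℝ}

theorem finrank_le (hv : IsParsevalFrame v) (hγ : ∀ x, ‖v x‖ ^ 2 ≤ γ / Fintype.card ι) :
    (finrank ℝ E : ℝ) ≤ γ := by
  have hn : (Fintype.card ι : ℝ) ≠ 0 := Nat.cast_ne_zero.mpr Fintype.card_ne_zero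
  calc (finrank ℝ E : ℝ) = ∑ x, ‖v x‖ ^ 2 := hv.sum_norm_sq.symm
    _ ≤ ∑ _x : ι, γ / Fintype.card ι := Finset.sum_le_sum fun x _ => hγ x
    _ = γ := by rw [Finset.sum_const, Finset.card_univ, nsmul_eq_mul, mul_div_cancel₀ _ hn]

theorem sum_finrank_orthogonal_sup_span_singleton_le (hv : IsParsevalFrame v)
    (hγ : ∀ x, ‖v x‖ ^ 2 ≤ γ / Fintype.card ι) (hγ_pos : 0 < γ) (U : Submodule ℝ E) :
    ∑ x, (finrank ℝ (U ⊔ ℝ ∙ v x)ᗮ : ℝ) ≤ Fintype.card ι * (1 - γ⁻¹) * finrank ℝ Uᗮ := by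
  have hn : (0 : ℝ) < Fintype.card ι := Nat.cast_pos.mpr Fintype.card_pos
  have hsum : ∑ x, finrank ℝ (U ⊔ ℝ ∙ v x)ᗮ + (Finset.univ.filter fun x => v x ∉ U).card =
      Fintype.card ι * finrank ℝ Uᗮ := by
    simp_rw [Finset.card_filter, ← Finset.sum_add_distrib, ite_not,
      finrank_orthogonal_sup_span_singleton_add, Finset.sum_const, Finset.card_univ, smul_eq_mul]
  have hcount := hv.finrank_orthogonal_le_card_notMem_mul hγ U
  rw [mul_div_assoc', le_div_iff₀ hn] at hcount
  have hcount' :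
      Fintype.card ι * finrank ℝ Uᗮ * γ⁻¹ ≤ (Finset.univ.filter fun x => v x ∉ U).card := by
    rw [← div_eq_mul_inv, div_le_iff₀ hγ_pos]; linarith
  have hsumℝ := congrArg (Nat.cast (R := ℝ)) hsum
  push_cast at hsumℝ
  linarith

theorem sum_finrank_orthogonal_span_le (hv : IsParsevalFrame v)
    (hγ : ∀ x, ‖v x‖ ^ 2 ≤ γ / Fintype.card ι) (hγ_one : 1 ≤ γ) (t : ℕ) :
    ∑ f : Fin t → ι, (finrank ℝ (span ℝ (Set.range (v ∘ f)))ᗮ : ℝ) ≤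
      (Fintype.card ι * (1 - γ⁻¹)) ^ t * finrank ℝ E := by
  induction t with
  | zero => simpa using Submodule.finrank_le _
  | succ t ih =>
    have hfactor : 0 ≤ Fintype.card ι * (1 - γ⁻¹) :=
      mul_nonneg (Nat.cast_nonneg _) (sub_nonneg.mpr (inv_le_one_of_one_le₀ hγ_one))
    calc ∑ f : Fin (t + 1) → ι, (finrank ℝ (span ℝ (Set.range (v ∘ f)))ᗮ : ℝ)
        = ∑ f : Fin t → ι, ∑ x, (finrank ℝ (span ℝ (Set.range (v ∘ f)) ⊔ ℝ ∙ v x)ᗮ : ℝ) := by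
          rw [← Fintype.sum_equiv (Fin.consEquiv fun _ => ι) (fun p : ι × (Fin t → ι) =>
            (finrank ℝ (span ℝ (Set.range (v ∘ Fin.cons p.1 p.2)))ᗮ : ℝ)) _ fun _ => rfl,
            Fintype.sum_prod_type, Finset.sum_comm]
          refine Finset.sum_congr rfl fun f _ => Finset.sum_congr rfl fun x _ => ?_
          rw [← span_range_comp_cons]
      _ ≤ ∑ f : Fin t → ι, Fintype.card ι * (1 - γ⁻¹) *
            (finrank ℝ (span ℝ (Set.range (v ∘ f)))ᗮ : ℝ) :=
          Finset.sum_le_sum fun f _ => hv.sum_finrank_orthogonal_sup_span_singleton_le hγ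
            (zero_lt_one.trans_le hγ_one) _
      _ ≤ Fintype.card ι * (1 - γ⁻¹) * ((Fintype.card ι * (1 - γ⁻¹)) ^ t * finrank ℝ E) := by
          rw [← Finset.mul_sum]
          exact mul_le_mul_of_nonneg_left ih hfactor
      _ = (Fintype.card ι * (1 - γ⁻¹)) ^ (t + 1) * finrank ℝ E := by ring

theorem unifProb_span_ne_top_le (hv : IsParsevalFrame v)
    (hγ : ∀ x, ‖v x‖ ^ 2 ≤ γ / Fintype.card ι) {s t : ℕ}
    (ht : s * γ * Real.log (Fintype.card ι) ≤ t) :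
    unifProb (fun f : Fin t → ι => span ℝ (Set.range (v ∘ f)) ≠ ⊤) ≤
      finrank ℝ E / Fintype.card ι ^ s := by
  rcases (finrank ℝ E).eq_zero_or_pos with hE | hE
  · have : Subsingleton E := finrank_zero_iff.mp hE
    simp [unifProb, Subsingleton.elim _ (⊤ : Submodule ℝ E), hE]
  have hγ_one : 1 ≤ γ := le_trans (by exact_mod_cast hE) (hv.finrank_le hγ)
  have hn : (0 : ℝ) < Fintype.card ι := Nat.cast_pos.mpr Fintype.card_pos
  have hcard : (Fintype.card (Fin t → ι) : ℝ) = Fintype.card ι ^ t := by simp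
  rw [unifProb, hcard]
  calc _ ≤ (∑ f : Fin t → ι, (finrank ℝ (span ℝ (Set.range (v ∘ f)))ᗮ : ℝ)) /
          Fintype.card ι ^ t := by
        gcongr
        rw [Finset.cast_card]
        refine (Finset.sum_le_sum fun f hf => ?_).trans (Finset.sum_le_sum_of_subset_of_nonneg
          (Finset.subset_univ _) fun _ _ _ => by positivity)
        -- Markov's inequality: a sample that does not span has codimension at least `1`
        have hne : (span ℝ (Set.range (v ∘ f)))ᗮ ≠ ⊥ :=
          fun h => by simp [orthogonal_eq_bot_iff.mp h] at hf
        exact_mod_cast Nat.one_le_iff_ne_zero.mpr fun h => hne (finrank_eq_zero.mp h)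
    _ ≤ (Fintype.card ι * (1 - γ⁻¹)) ^ t * finrank ℝ E / Fintype.card ι ^ t := by
        gcongr
        exact hv.sum_finrank_orthogonal_span_le hγ hγ_one t
    _ = finrank ℝ E * (1 - γ⁻¹) ^ t := by
        rw [mul_pow, mul_assoc, mul_div_cancel_left₀ _ (pow_ne_zero _ hn.ne'), mul_comm]
    _ ≤ finrank ℝ E * ((Fintype.card ι : ℝ) ^ s)⁻¹ :=
        mul_le_mul_of_nonneg_left (one_sub_inv_pow_le_inv_pow hγ_one Fintype.card_pos ht)
          (Nat.cast_nonneg _)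
    _ = finrank ℝ E / Fintype.card ι ^ s := (div_eq_mul_inv _ _).symm

end IsParsevalFrame

namespace Matrix

section

variable {m k : Type*} [Fintype m] [Fintype k]

theorem exists_mul_eq_one_of_rank_eq {K : Type*} [Field K] [DecidableEq k] (M : Matrix m k K)
    (h : M.rank = Fintype.card k) : ∃ L : Matrix k m K, L * M = 1 := by
  have hspan : span K (Set.range M.row) = ⊤ :=
    eq_top_of_finrank_eq (by rw [← rank_eq_finrank_span_row, h, finrank_fintype_fun_eq_card])
  choose c hc using fun j =>
    (mem_span_range_iff_exists_fun K).mp (hspan ▸ mem_top (x := Pi.single j 1))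
  refine ⟨of c, ext fun j l => ?_⟩
  have hcol := congrFun (hc j) l
  simp only [Finset.sum_apply, Pi.smul_apply, smul_eq_mul, Pi.single_apply] at hcol
  simpa [mul_apply, one_apply, mul_comm, eq_comm] using hcol.symm

theorem rank_eq_finrank_span_toLp_row (A : Matrix m k ℝ) :
    A.rank = finrank ℝ (span ℝ (Set.range fun i => WithLp.toLp 2 (A i))) := by
  rw [rank_eq_finrank_span_row, ← (WithLp.linearEquiv 2 ℝ (k → ℝ)).symm.finrank_map_eq, map_span,
    ← Set.range_comp]
  rfl

theorem isParsevalFrame_toLp_row [DecidableEq k] {W : Matrix m k ℝ} (hW : Wᵀ * W = 1) :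
    IsParsevalFrame fun x => WithLp.toLp 2 (W x) := by
  intro u
  have hinner (x : m) : ⟪WithLp.toLp 2 (W x), u⟫ = (W *ᵥ u.ofLp) x := by
    simp [EuclideanSpace.inner_eq_star_dotProduct, mulVec, dotProduct_comm]
  calc ∑ x, ⟪WithLp.toLp 2 (W x), u⟫ ^ 2 = (W *ᵥ u.ofLp) ⬝ᵥ (W *ᵥ u.ofLp) := by
        simp [hinner, dotProduct, sq]
    _ = u.ofLp ⬝ᵥ u.ofLp := by
        rw [dotProduct_mulVec, ← vecMul_transpose, vecMul_vecMul, hW, vecMul_one]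
    _ = ‖u‖ ^ 2 := by
        rw [← real_inner_self_eq_norm_sq, EuclideanSpace.inner_eq_star_dotProduct, star_trivial]

end

section

variable {α : Type*} [Semiring α] {m m' k k' p q : Type*} [Fintype k] [Fintype k']

theorem submatrix_mul_mul (C : Matrix m k α) (S : Matrix k k' α) (R : Matrix k' m' α)
    (f : p → m) (g : q → m') :
    (C * S * R).submatrix f g = C.submatrix f id * S * R.submatrix id g := by
  ext; simp [mul_apply]

theorem eq_submatrix_mul_mul_submatrix [Fintype p] [Fintype q] [DecidableEq k] [DecidableEq k']
    {X : Matrix m m' α} {C : Matrix m k α} {S : Matrix k k' α}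
    {R : Matrix k' m' α} (hX : X = C * S * R) {f : p → m} {g : q → m'}
    {L : Matrix k p α} (hL : L * C.submatrix f id = 1)
    {N : Matrix q k' α} (hN : R.submatrix id g * N = 1)
    {U : Matrix q p α} (hU : X.submatrix f g * U * X.submatrix f g = X.submatrix f g) :
    X = X.submatrix id g * U * X.submatrix f id := by
  subst hX
  simp only [submatrix_mul_mul, submatrix_id_id] at hU ⊢
  have hcancel (Y : Matrix k m' α) : L * (C.submatrix f id * Y) = Y := by
    rw [← Matrix.mul_assoc, hL, Matrix.one_mul]
  -- `L` and `N` cancel the outer factors of `X[f, g] U X[f, g] = X[f, g]`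
  have hS : S * (R.submatrix id g * (U * (C.submatrix f id * (S * R)))) = S * R := by
    have h := congrArg (fun Y => L * Y * N * R) hU
    simp only [Matrix.mul_assoc] at h
    rwa [hcancel, hcancel, ← Matrix.mul_assoc (R.submatrix id g) N, hN, Matrix.one_mul] at h
  simp only [Matrix.mul_assoc]
  rw [hS]

end

variable {n r : ℕ}

theorem sum_sq_row_le_of_sqrt_le {W : Matrix (Fin n) (Fin r) ℝ} (hW : Wᵀ * W = 1) {μ : ℝ}
    (h : ∀ i, √(∑ j, W i j ^ 2) ≤ √(μ * r / n)) (i : Fin n) :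
    ∑ j, W i j ^ 2 ≤ μ * r / n := by
  suffices hb : 0 ≤ μ * r / n from (Real.sqrt_le_sqrt_iff hb).mp (h i)
  rcases Nat.eq_zero_or_pos r with rfl | hr
  · simp
  by_contra! hneg
  -- otherwise every row of `W` vanishes, contradicting `Wᵀ * W = 1`
  have hW0 : W = 0 := by
    ext i j
    have hrow : ∑ j, W i j ^ 2 ≤ 0 :=
      Real.sqrt_eq_zero'.mp (((h i).trans_eq (Real.sqrt_eq_zero_of_nonpos hneg.le)).antisymm
        (Real.sqrt_nonneg _))
    simpa using (Finset.sum_eq_zero_iff_of_nonneg fun j _ => sq_nonneg (W i j)).mp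
      (hrow.antisymm (by positivity)) j (Finset.mem_univ _)
  have : Nonempty (Fin r) := ⟨⟨0, hr⟩⟩
  exact one_ne_zero (hW.symm.trans (by rw [hW0, Matrix.mul_zero]))

theorem le_unifProb_rank_submatrix [NeZero n] {W : Matrix (Fin n) (Fin r) ℝ} (hW : Wᵀ * W = 1)
    {μ : ℝ} (hinc : ∀ i, √(∑ j, W i j ^ 2) ≤ √(μ * r / n)) {s t : ℕ}
    (ht : s * μ * r * Real.log n ≤ t) :
    1 - r / (n : ℝ) ^ s ≤ unifProb fun f : Fin t → Fin n => (W.submatrix f id).rank = r := by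
  set v : Fin n → EuclideanSpace ℝ (Fin r) := fun x => WithLp.toLp 2 (W x)
  have hnorm (x : Fin n) : ‖v x‖ ^ 2 ≤ μ * r / Fintype.card (Fin n) := by
    rw [EuclideanSpace.norm_sq_eq, Fintype.card_fin]
    simpa using sum_sq_row_le_of_sqrt_le hW hinc x
  have hbad := (isParsevalFrame_toLp_row hW).unifProb_span_ne_top_le hnorm (s := s) (t := t)
    (by rw [Fintype.card_fin, ← mul_assoc]; exact ht)
  rw [finrank_euclideanSpace_fin, Fintype.card_fin] at hbad
  have hrank : (fun f : Fin t → Fin n => (W.submatrix f id).rank = r) =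
      fun f => ¬span ℝ (Set.range (v ∘ f)) ≠ ⊤ := by
    refine funext fun f => propext ?_
    rw [not_not, rank_eq_finrank_span_toLp_row, eq_top_iff_finrank_eq, finrank_euclideanSpace_fin]
    rfl
  rw [hrank, unifProb_not]
  linarith

theorem eq_cur_of_rank_eq {kI kJ : ℕ} {X : Matrix (Fin n) (Fin n) ℝ}
    {W V : Matrix (Fin n) (Fin r) ℝ} {σ : Fin r → ℝ} (hX : X = W * diagonal σ * Vᵀ)
    {f : Fin kI → Fin n} {g : Fin kJ → Fin n} (hf : (W.submatrix f id).rank = r)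
    (hg : (V.submatrix g id).rank = r) {U : Matrix (Fin kJ) (Fin kI) ℝ}
    (hU : IsMPInv (X.submatrix f g) U) :
    X = X.submatrix id g * U * X.submatrix f id := by
  obtain ⟨L, hL⟩ := (W.submatrix f id).exists_mul_eq_one_of_rank_eq (by rwa [Fintype.card_fin])
  obtain ⟨L', hL'⟩ := (V.submatrix g id).exists_mul_eq_one_of_rank_eq (by rwa [Fintype.card_fin])
  refine eq_submatrix_mul_mul_submatrix hX hL (N := L'ᵀ) ?_ hU.1
  rw [← transpose_submatrix, ← transpose_mul, hL', transpose_one]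

end Matrix

theorem uniform_sampling_cur_reconstruction_general (n r kI kJ : ℕ) (hn : 0 < n)
    (X : Matrix (Fin n) (Fin n) ℝ) (μ₁ μ₂ : ℝ)
    (W V : Matrix (Fin n) (Fin r) ℝ) (σ : Fin r → ℝ)
    (hX : X = W * Matrix.diagonal σ * Vᵀ)
    (hWortho : Wᵀ * W = 1) (hVortho : Vᵀ * V = 1)
    (hWinc : ∀ i, Real.sqrt (∑ j, (W i j) ^ 2) ≤ Real.sqrt (μ₁ * r / n))
    (hVinc : ∀ i, Real.sqrt (∑ j, (V i j) ^ 2) ≤ Real.sqrt (μ₂ * r / n))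
    (hkI : (kI : ℝ) ≥ 10 * μ₁ * r * Real.log n)
    (hkJ : (kJ : ℝ) ≥ 10 * μ₂ * r * Real.log n) :
    1 - 4 * r / (n : ℝ) ^ 2 ≤
      unifProb (fun fg : (Fin kI → Fin n) × (Fin kJ → Fin n) =>
        ∀ Udag : Matrix (Fin kJ) (Fin kI) ℝ,
          IsMPInv (X.submatrix fg.1 fg.2) Udag →
            X = X.submatrix id fg.2 * Udag * X.submatrix fg.1 id) := by
  have : NeZero n := ⟨hn.ne'⟩
  have hW := le_unifProb_rank_submatrix hWortho hWinc (s := 10) (t := kI) (by exact_mod_cast hkI)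
  have hV := le_unifProb_rank_submatrix hVortho hVinc (s := 10) (t := kJ) (by exact_mod_cast hkJ)
  have hfailure : (r : ℝ) / n ^ 10 ≤ r / n ^ 2 :=
    div_le_div_of_nonneg_left (Nat.cast_nonneg r) (by positivity)
      (pow_le_pow_right₀ (Nat.one_le_cast.mpr hn) (by norm_num))
  calc 1 - 4 * r / (n : ℝ) ^ 2 ≤ 1 - (r / (n : ℝ) ^ 10 + r / (n : ℝ) ^ 10) := by
        have : (0 : ℝ) ≤ r / n ^ 2 := by positivity
        rw [mul_div_assoc]
        linarith
    _ ≤ _ := one_sub_add_le_unifProb_and hW hV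
    _ ≤ _ := unifProb_mono fun _ h _ hU => Matrix.eq_cur_of_rank_eq hX h.1 h.2 hU

/-- Let `X ∈ ℝ^{n×n}` be rank-`r` and `{μ₁,μ₂}`-incoherent
(expressed via a compact SVD `X = W Σ Vᵀ` with row-norm bounds on `W` and `V`).
Draw `kI ≥ 10 μ₁ r log n` row indices and `kJ ≥ 10 μ₂ r log n` column indices
i.i.d. uniformly from `[n]` (with replacement). Then with probability at least
`1 − 4r/n²`, `X = X[:,J] (X[I,J])† X[I,:]`, i.e. `X` is exactly reconstructed by
the CUR decomposition formed from its sampled columns and rows. -/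
theorem uniform_sampling_cur_reconstruction (n r kI kJ : ℕ) (hn : 0 < n)
    (X : Matrix (Fin n) (Fin n) ℝ) (hrank : X.rank = r) (μ₁ μ₂ : ℝ)
    (W V : Matrix (Fin n) (Fin r) ℝ) (σ : Fin r → ℝ) (hσ : ∀ i, 0 < σ i)
    (hX : X = W * Matrix.diagonal σ * Vᵀ)
    (hWortho : Wᵀ * W = 1) (hVortho : Vᵀ * V = 1)
    (hWinc : ∀ i, Real.sqrt (∑ j, (W i j) ^ 2) ≤ Real.sqrt (μ₁ * r / n))
    (hVinc : ∀ i, Real.sqrt (∑ j, (V i j) ^ 2) ≤ Real.sqrt (μ₂ * r / n))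
    (hkI : (kI : ℝ) ≥ 10 * μ₁ * r * Real.log n)
    (hkJ : (kJ : ℝ) ≥ 10 * μ₂ * r * Real.log n) :
    1 - 4 * r / (n : ℝ) ^ 2 ≤
      unifProb (fun fg : (Fin kI → Fin n) × (Fin kJ → Fin n) =>
        ∀ Udag : Matrix (Fin kJ) (Fin kI) ℝ,
          IsMPInv (X.submatrix fg.1 fg.2) Udag →
            X = X.submatrix id fg.2 * Udag * X.submatrix fg.1 id) :=
  uniform_sampling_cur_reconstruction_general n r kI kJ hn X μ₁ μ₂ W V σ hX hWortho hVortho hWinc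
    hVinc hkI hkJ
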